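/- Let 0 < p < 2 and let a ≥ b ≥ 0 be real numbers with a > 0. Then a^p - b^p = (p sin(pπ/2)/π) · ∫₀^∞ z^(p-1) log((z² + a²)/(z² + b²)) dz. -/

import Mathlib

open Real MeasureTheory Set Filter Asymptotics

/-!
Since `d/dt log (z² + t²) = 2t / (z² + t²)`, Fubini turns the right-hand side into
`∫_b^a ∫_0^∞ z^(p-1) · 2t / (z² + t²) dz dt`. The substitution `z = t w` shows that the inner
integral is `t^(p-1) · C` with `C = ∫_0^∞ 2 w^(p-1) / (w² + 1) dw`, so the double integral is
`C (a^p - b^p) / p`. Finally `w² = x` and `x = u / (1 - u)` turn `C` into the Beta integral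
`B(p/2, 1 - p/2) = Γ(p/2) Γ(1 - p/2) = π / sin (p π / 2)`.
-/

theorem integral_Ioo_rpow_mul_one_sub_rpow_neg {q : ℝ} (hq0 : 0 < q) (hq1 : q < 1) :
    ∫ t in Ioo (0 : ℝ) 1, t ^ (q - 1) * (1 - t) ^ (-q) = π / sin (π * q) := by
  have hbeta : Complex.betaIntegral q (1 - q) = ((π / sin (π * q) : ℝ) : ℂ) := by
    rw [← Real.Gamma_mul_Gamma_one_sub, Complex.betaIntegral_eq_Gamma_mul_div _ _
      (by simpa using hq0) (by simpa using hq1)]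
    push_cast
    rw [add_sub_cancel, Complex.Gamma_one, div_one, Complex.Gamma_ofReal, ← Complex.ofReal_one,
      ← Complex.ofReal_sub, Complex.Gamma_ofReal]
  have hreal : Complex.betaIntegral q (1 - q) =
      ((∫ t in (0 : ℝ)..1, t ^ (q - 1) * (1 - t) ^ (-q) : ℝ) : ℂ) := by
    rw [Complex.betaIntegral, ← intervalIntegral.integral_ofReal]
    refine intervalIntegral.integral_congr fun t ht => ?_
    rw [uIcc_of_le zero_le_one] at ht
    push_cast
    rw [Complex.ofReal_cpow ht.1, Complex.ofReal_cpow (sub_nonneg.2 ht.2)]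
    push_cast
    ring_nf
  rw [← integral_Ioc_eq_integral_Ioo, ← intervalIntegral.integral_of_le zero_le_one]
  exact_mod_cast hreal.symm.trans hbeta

theorem integral_Ioi_rpow_div_one_add_eq_integral_Ioo (q : ℝ) :
    ∫ x in Ioi (0 : ℝ), x ^ (q - 1) / (1 + x) =
      ∫ t in Ioo (0 : ℝ) 1, t ^ (q - 1) * (1 - t) ^ (-q) := by
  have himage : (fun t : ℝ => t / (1 - t)) '' Ioo 0 1 = Ioi 0 := by
    refine Subset.antisymm (image_subset_iff.2 fun t ht => div_pos ht.1 (sub_pos.2 ht.2))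
      fun x (hx : 0 < x) => ⟨x / (1 + x), ⟨by positivity, by rw [div_lt_one] <;> linarith⟩, ?_⟩
    field_simp
    ring
  have hderiv : ∀ t ∈ Ioo (0 : ℝ) 1,
      HasDerivWithinAt (fun t : ℝ => t / (1 - t)) (((1 - t) ^ 2)⁻¹) (Ioo 0 1) t := by
    intro t ht
    have h1 : 1 - t ≠ 0 := (sub_pos.2 ht.2).ne'
    refine (((hasDerivAt_id' t).div ((hasDerivAt_id' t).const_sub 1) h1)
      |>.hasDerivWithinAt).congr_deriv ?_
    field_simp
    ring
  have hinj : InjOn (fun t : ℝ => t / (1 - t)) (Ioo 0 1) := by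
    intro s hs t ht hst
    have hs1 : 1 - s ≠ 0 := (sub_pos.2 hs.2).ne'
    have ht1 : 1 - t ≠ 0 := (sub_pos.2 ht.2).ne'
    field_simp at hst
    linarith
  rw [← himage, integral_image_eq_integral_abs_deriv_smul measurableSet_Ioo hderiv hinj]
  refine setIntegral_congr_fun measurableSet_Ioo fun t ⟨ht0, ht1⟩ => ?_
  have h1 : 0 < 1 - t := sub_pos.2 ht1
  have hpow : (1 - t) ^ (q - 1) * (1 - t) = (1 - t) ^ q := by
    rw [← rpow_add_one h1.ne', sub_add_cancel]
  rw [smul_eq_mul, div_rpow ht0.le h1.le, rpow_neg h1.le, abs_of_pos (by positivity)]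
  field_simp
  linear_combination -hpow

theorem integral_Ioi_rpow_div_one_add {q : ℝ} (hq0 : 0 < q) (hq1 : q < 1) :
    ∫ x in Ioi (0 : ℝ), x ^ (q - 1) / (1 + x) = π / sin (π * q) := by
  rw [integral_Ioi_rpow_div_one_add_eq_integral_Ioo, integral_Ioo_rpow_mul_one_sub_rpow_neg hq0 hq1]

theorem integral_Ioi_two_mul_rpow_div_sq_add_one {p : ℝ} (hp0 : 0 < p) (hp2 : p < 2) :
    ∫ w in Ioi (0 : ℝ), 2 * w ^ (p - 1) / (w ^ 2 + 1) = π / sin (π * (p / 2)) := by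
  rw [← integral_Ioi_rpow_div_one_add (half_pos hp0) (by linarith),
    ← integral_comp_rpow_Ioi_of_pos (g := fun x => x ^ (p / 2 - 1) / (1 + x)) two_pos]
  refine setIntegral_congr_fun measurableSet_Ioi fun w (hw : 0 < w) => ?_
  have hpow : (w ^ (2 : ℝ)) ^ (p / 2 - 1) * w = w ^ (p - 1) := by
    rw [← rpow_mul hw.le, ← rpow_add_one hw.ne']
    ring_nf
  rw [smul_eq_mul, ← hpow, rpow_two, show (2 : ℝ) - 1 = 1 by norm_num, rpow_one]
  field_simp
  ring

theorem integral_Ioi_rpow_mul_two_mul_div_sq_add_sq (p : ℝ) {t : ℝ} (ht : 0 < t) :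
    ∫ z in Ioi (0 : ℝ), z ^ (p - 1) * (2 * t / (z ^ 2 + t ^ 2)) =
      t ^ (p - 1) * ∫ w in Ioi (0 : ℝ), 2 * w ^ (p - 1) / (w ^ 2 + 1) := by
  have hscale := integral_comp_mul_left_Ioi'
    (fun z => z ^ (p - 1) * (2 * t / (z ^ 2 + t ^ 2))) 0 ht
  rw [mul_zero] at hscale
  rw [← hscale, smul_eq_mul, ← integral_const_mul, ← integral_const_mul]
  refine setIntegral_congr_fun measurableSet_Ioi fun w (hw : 0 < w) => ?_
  rw [mul_rpow ht.le hw.le]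
  field_simp

theorem integrableOn_Ioi_rpow_mul_two_mul_div_sq_add_sq {p t : ℝ} (hp0 : 0 < p) (hp2 : p < 2)
    (ht : 0 < t) :
    IntegrableOn (fun z => z ^ (p - 1) * (2 * t / (z ^ 2 + t ^ 2))) (Ioi 0) := by
  have hcont : Continuous fun z : ℝ => 2 * t / (z ^ 2 + t ^ 2) :=
    continuous_const.div (by fun_prop) fun z => by positivity
  refine mellin_convergent_of_isBigO_scalar (a := 2) (b := 0)
    (hcont.locallyIntegrable.locallyIntegrableOn _) ?_ hp2 ?_ hp0
  · refine IsBigO.of_bound (2 * t) ?_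
    filter_upwards [eventually_gt_atTop 0] with z hz
    rw [Real.norm_of_nonneg (by positivity), Real.norm_of_nonneg (by positivity), rpow_neg hz.le,
      rpow_two, ← div_eq_mul_inv]
    exact div_le_div_of_nonneg_left (by positivity) (by positivity) (by nlinarith)
  · refine IsBigO.of_bound (2 / t) (Eventually.of_forall fun z => ?_)
    rw [Real.norm_of_nonneg (by positivity), neg_zero, rpow_zero, norm_one, mul_one,
      div_le_div_iff₀ (by positivity) ht]
    nlinarith [sq_nonneg z]

theorem integral_two_mul_div_sq_add_sq {z : ℝ} (hz : z ≠ 0) (a b : ℝ) :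
    ∫ t in b..a, 2 * t / (z ^ 2 + t ^ 2) = log ((z ^ 2 + a ^ 2) / (z ^ 2 + b ^ 2)) := by
  have hpos : ∀ t : ℝ, 0 < z ^ 2 + t ^ 2 := fun t => by positivity
  rw [log_div (hpos a).ne' (hpos b).ne']
  have hcont : Continuous fun t : ℝ => 2 * t / (z ^ 2 + t ^ 2) :=
    .div (by fun_prop) (by fun_prop) fun t => (hpos t).ne'
  refine intervalIntegral.integral_eq_sub_of_hasDerivAt (f := fun t => log (z ^ 2 + t ^ 2))
    (fun t _ => ?_) (hcont.intervalIntegrable _ _)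
  simpa using ((hasDerivAt_pow 2 t).const_add (z ^ 2)).log (hpos t).ne'

theorem integrable_prod_rpow_mul_two_mul_div_sq_add_sq {p a b : ℝ} (hp0 : 0 < p) (hp2 : p < 2)
    (hb : 0 ≤ b) (hab : b ≤ a) :
    Integrable (fun x : ℝ × ℝ => x.2 ^ (p - 1) * (2 * x.1 / (x.2 ^ 2 + x.1 ^ 2)))
      ((volume.restrict (Ioc b a)).prod (volume.restrict (Ioi 0))) := by
  rw [integrable_prod_iff (by fun_prop), ae_restrict_iff' measurableSet_Ioc]
  refine ⟨ae_of_all _ fun t ht => integrableOn_Ioi_rpow_mul_two_mul_div_sq_add_sq hp0 hp2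
    (hb.trans_lt ht.1), ?_⟩
  have hrpow : IntegrableOn (fun t : ℝ => t ^ (p - 1)) (Ioc b a) :=
    (intervalIntegrable_iff_integrableOn_Ioc_of_le hab).1
      (intervalIntegral.intervalIntegrable_rpow' (by linarith))
  refine (hrpow.mul_const (∫ w in Ioi (0 : ℝ), 2 * w ^ (p - 1) / (w ^ 2 + 1))).congr ?_
  rw [EventuallyEq, ae_restrict_iff' measurableSet_Ioc]
  refine ae_of_all _ fun t ht => ?_
  have ht0 : 0 < t := hb.trans_lt ht.1
  rw [← integral_Ioi_rpow_mul_two_mul_div_sq_add_sq p ht0]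
  refine setIntegral_congr_fun measurableSet_Ioi fun z (hz : 0 < z) => ?_
  exact (Real.norm_of_nonneg (by positivity)).symm

theorem integral_Ioi_rpow_mul_log_div {p a b : ℝ} (hp0 : 0 < p) (hp2 : p < 2) (hb : 0 ≤ b)
    (hab : b ≤ a) :
    ∫ z in Ioi (0 : ℝ), z ^ (p - 1) * log ((z ^ 2 + a ^ 2) / (z ^ 2 + b ^ 2)) =
      (a ^ p - b ^ p) / p * ∫ w in Ioi (0 : ℝ), 2 * w ^ (p - 1) / (w ^ 2 + 1) := by
  calc ∫ z in Ioi (0 : ℝ), z ^ (p - 1) * log ((z ^ 2 + a ^ 2) / (z ^ 2 + b ^ 2))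
      = ∫ z in Ioi (0 : ℝ), ∫ t in Ioc b a, z ^ (p - 1) * (2 * t / (z ^ 2 + t ^ 2)) := by
        refine setIntegral_congr_fun measurableSet_Ioi fun z (hz : 0 < z) => ?_
        rw [← integral_two_mul_div_sq_add_sq hz.ne', ← intervalIntegral.integral_const_mul,
          intervalIntegral.integral_of_le hab]
    _ = ∫ t in Ioc b a, ∫ z in Ioi (0 : ℝ), z ^ (p - 1) * (2 * t / (z ^ 2 + t ^ 2)) :=
        (integral_integral_swap (integrable_prod_rpow_mul_two_mul_div_sq_add_sq hp0 hp2 hb hab)).symm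
    _ = ∫ t in Ioc b a, t ^ (p - 1) * ∫ w in Ioi (0 : ℝ), 2 * w ^ (p - 1) / (w ^ 2 + 1) :=
        setIntegral_congr_fun measurableSet_Ioc fun t ht =>
          integral_Ioi_rpow_mul_two_mul_div_sq_add_sq p (hb.trans_lt ht.1)
    _ = (a ^ p - b ^ p) / p * ∫ w in Ioi (0 : ℝ), 2 * w ^ (p - 1) / (w ^ 2 + 1) := by
        rw [integral_mul_const, ← intervalIntegral.integral_of_le hab,
          integral_rpow (Or.inl (by linarith)), sub_add_cancel]

theorem coulson_jacobs_pair_general (p a b : ℝ) (hp0 : 0 < p) (hp2 : p < 2)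
    (hab : b ≤ a) (hb : 0 ≤ b) :
    a ^ p - b ^ p = (p * Real.sin (p * π / 2) / π) *
      ∫ z in Ioi (0 : ℝ), z ^ (p - 1) * Real.log ((z ^ 2 + a ^ 2) / (z ^ 2 + b ^ 2)) := by
  have hsin : 0 < sin (p * π / 2) :=
    sin_pos_of_pos_of_lt_pi (by positivity) (by nlinarith [pi_pos])
  rw [integral_Ioi_rpow_mul_log_div hp0 hp2 hb hab,
    integral_Ioi_two_mul_rpow_div_sq_add_one hp0 hp2,
    show π * (p / 2) = p * π / 2 by ring]
  field_simp

theorem coulson_jacobs_pair (p a b : ℝ) (hp0 : 0 < p) (hp2 : p < 2)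
    (hab : b ≤ a) (hb : 0 ≤ b) (ha : 0 < a) :
    a ^ p - b ^ p = (p * Real.sin (p * π / 2) / π) *
      ∫ z in Ioi (0 : ℝ), z ^ (p - 1) * Real.log ((z ^ 2 + a ^ 2) / (z ^ 2 + b ^ 2)) :=
  coulson_jacobs_pair_general p a b hp0 hp2 hab hb
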